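/- arXiv:1011.2806 — 2 statements merged into one kernel-verified Lean document; each statement's English description precedes it below -/
import Mathlib

section
/- Let F(s,u) = γ(s) + uξ(s) be the asymptotic completion of a developable Möbius strip, i.e., det(γ'(s), ξ(s), ξ'(s)) = 0 for all s. Let s₁ < s₂ be real numbers with ξ'(s₁) = ξ'(s₂) = 0 and ξ'(s) ≠ 0 for all s ∈ (s₁,s₂), and suppose γ'(s)·ξ'(s) > 0 for all s ∈ (s₁,s₂). Then the singular-curve height function u(s) := - |γ'(s) × ξ(s)|² / (γ'(s)·ξ'(s)) satisfies u(s) → -∞ as s → s₁ from above and u(s) → -∞ as s → s₂ from below. -/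
open scoped RealInnerProductSpace
open Real Set Filter Topology

noncomputable section

/-- Euclidean 3-space. -/
abbrev E3 : Type := EuclideanSpace ℝ (Fin 3)

/-- The cross (vector) product in `ℝ³`. -/
def cross3 (a b : E3) : E3 :=
  (WithLp.equiv 2 (Fin 3 → ℝ)).symm
    ![a 1 * b 2 - a 2 * b 1, a 2 * b 0 - a 0 * b 2, a 0 * b 1 - a 1 * b 0]

/-- The determinant of three vectors in `ℝ³`. -/
def det3 (a b c : E3) : ℝ :=
  Matrix.det (Matrix.of ![(fun i => a i), (fun i => b i), (fun i => c i)])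

lemma cross3_apply (a b : E3) (i : Fin 3) :
    cross3 a b i = ![a 1 * b 2 - a 2 * b 1, a 2 * b 0 - a 0 * b 2,
      a 0 * b 1 - a 1 * b 0] i := rfl

lemma cross3_ne_zero {a b : E3} (h : LinearIndependent ℝ ![a, b]) :
    cross3 a b ≠ 0 := by
  intro hc
  have h0 : a 1 * b 2 - a 2 * b 1 = 0 := congrArg (fun v : E3 => v 0) hc
  have h1 : a 2 * b 0 - a 0 * b 2 = 0 := congrArg (fun v : E3 => v 1) hc
  have h2 : a 0 * b 1 - a 1 * b 0 = 0 := congrArg (fun v : E3 => v 2) hc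
  rw [linearIndependent_fin2] at h
  obtain ⟨hb, hab⟩ := h
  simp only [Matrix.cons_val_one, Matrix.head_cons, Matrix.cons_val_zero] at hb hab
  by_cases k0 : b 0 = 0
  · by_cases k1 : b 1 = 0
    · by_cases k2 : b 2 = 0
      · exact hb (by ext j; fin_cases j; exacts [k0, k1, k2])
      · refine hab (a 2 / b 2) (PiLp.ext fun j => ?_)
        fin_cases j
        · show a 2 / b 2 * b 0 = a 0; field_simp; linarith
        · show a 2 / b 2 * b 1 = a 1; field_simp; linarith
        · show a 2 / b 2 * b 2 = a 2; field_simp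
    · refine hab (a 1 / b 1) (PiLp.ext fun j => ?_)
      fin_cases j
      · show a 1 / b 1 * b 0 = a 0; field_simp; linarith
      · show a 1 / b 1 * b 1 = a 1; field_simp
      · show a 1 / b 1 * b 2 = a 2; field_simp; linarith
  · refine hab (a 0 / b 0) (PiLp.ext fun j => ?_)
    fin_cases j
    · show a 0 / b 0 * b 0 = a 0; field_simp
    · show a 0 / b 0 * b 1 = a 1; field_simp; linarith
    · show a 0 / b 0 * b 2 = a 2; field_simp; linarith

lemma continuous_cross3 {f g : ℝ → E3} (hf : Continuous f) (hg : Continuous g) :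
    Continuous (fun s => cross3 (f s) (g s)) := by
  have hfi : ∀ i : Fin 3, Continuous fun s => f s i := fun i =>
    (PiLp.continuous_apply 2 _ i).comp hf
  have hgi : ∀ i : Fin 3, Continuous fun s => g s i := fun i =>
    (PiLp.continuous_apply 2 _ i).comp hg
  have : Continuous fun s => ((cross3 (f s) (g s) : E3) : Fin 3 → ℝ) := by
    apply continuous_pi
    intro i
    fin_cases i <;> simp only [cross3_apply] <;>
      simp [Matrix.cons_val_zero, Matrix.cons_val_one, Matrix.head_cons] <;>
      exact (((hfi _).mul (hgi _)).sub ((hfi _).mul (hgi _)))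
  exact (PiLp.continuous_toLp 2 _).comp this

/-- Key limit lemma: if `f` is continuous at `s₀` with `f s₀ > 0`, `g` is continuous
at `s₀` with `g s₀ = 0`, and `g` is eventually positive along `L ≤ 𝓝 s₀`, then
`-f/g → -∞` along `L`. -/
lemma key_lim (f g : ℝ → ℝ) (s₀ : ℝ) (L : Filter ℝ) (hL : L ≤ 𝓝 s₀)
    (hf : ContinuousAt f s₀) (hg : ContinuousAt g s₀)
    (hf0 : 0 < f s₀) (hg0 : g s₀ = 0)
    (hgpos : ∀ᶠ s in L, 0 < g s) :
    Tendsto (fun s => -f s / g s) L atBot := by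
  have hgten : Tendsto g L (𝓝[>] 0) := by
    rw [tendsto_nhdsWithin_iff]
    exact ⟨hg0 ▸ (hg.tendsto.mono_left hL), hgpos⟩
  have hinv : Tendsto (fun s => (g s)⁻¹) L atTop := hgten.inv_tendsto_nhdsGT_zero
  have hmul : Tendsto (fun s => f s * (g s)⁻¹) L atTop :=
    Filter.Tendsto.pos_mul_atTop hf0 (hf.tendsto.mono_left hL) hinv
  have : Tendsto (fun s => -(f s * (g s)⁻¹)) L atBot := tendsto_neg_atBot_iff.mpr hmul
  refine this.congr fun s => ?_
  rw [neg_div, div_eq_mul_inv]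

/-- on a connected component `(s₁,s₂)` of `{ξ' ≠ 0}` on which `γ'·ξ' > 0`,
the singular-curve height `u(s) = -|γ' × ξ|²/(γ'·ξ')` tends to `-∞` at both endpoints. -/
theorem stmt_7 (l : ℝ) (hl : 0 < l) (γ ξ : ℝ → E3)
    (hγ : ContDiff ℝ (⊤ : ℕ∞) γ) (hξ : ContDiff ℝ (⊤ : ℕ∞) ξ)
    (hper : ∀ s, γ (s + l) = γ s) (hodd : ∀ s, ξ (s + l) = -ξ s)
    (hunit : ∀ s, ‖deriv γ s‖ = 1) (hξunit : ∀ s, ‖ξ s‖ = 1)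
    (hindep : ∀ s, LinearIndependent ℝ ![deriv γ s, ξ s])
    (hflat : ∀ s, det3 (deriv γ s) (ξ s) (deriv ξ s) = 0)
    (s₁ s₂ : ℝ) (h12 : s₁ < s₂)
    (hz1 : deriv ξ s₁ = 0) (hz2 : deriv ξ s₂ = 0)
    (hnz : ∀ s ∈ Set.Ioo s₁ s₂, deriv ξ s ≠ 0)
    (hpos : ∀ s ∈ Set.Ioo s₁ s₂, 0 < ⟪deriv γ s, deriv ξ s⟫) :
    Filter.Tendsto
        (fun s => -‖cross3 (deriv γ s) (ξ s)‖ ^ 2 / ⟪deriv γ s, deriv ξ s⟫)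
        (𝓝[>] s₁) Filter.atBot ∧
    Filter.Tendsto
        (fun s => -‖cross3 (deriv γ s) (ξ s)‖ ^ 2 / ⟪deriv γ s, deriv ξ s⟫)
        (𝓝[<] s₂) Filter.atBot := by
  have hdγ : Continuous (deriv γ) := hγ.continuous_deriv (by simp)
  have hdξ : Continuous (deriv ξ) := hξ.continuous_deriv (by simp)
  set f : ℝ → ℝ := fun s => ‖cross3 (deriv γ s) (ξ s)‖ ^ 2 with hfdef
  set g : ℝ → ℝ := fun s => ⟪deriv γ s, deriv ξ s⟫ with hgdef
  have hfc : Continuous f := ((continuous_cross3 hdγ hξ.continuous).norm).pow 2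
  have hgc : Continuous g := hdγ.inner hdξ
  have hf0 : ∀ s, 0 < f s := by
    intro s
    exact pow_pos (norm_pos_iff.2 (cross3_ne_zero (hindep s))) 2
  constructor
  · apply key_lim f g s₁ _ nhdsWithin_le_nhds hfc.continuousAt hgc.continuousAt (hf0 s₁)
    · simp [hgdef, hz1]
    · filter_upwards [Ioo_mem_nhdsGT_of_mem (left_mem_Ico.2 h12)] with s hs
      exact hpos s hs
  · apply key_lim f g s₂ _ nhdsWithin_le_nhds hfc.continuousAt hgc.continuousAt (hf0 s₂)
    · simp [hgdef, hz2]
    · filter_upwards [Ioo_mem_nhdsLT_of_mem (right_mem_Ioc.2 h12)] with s hs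
      exact hpos s hs
end
end

section
/- Let F(s,u) = γ(s) + uξ(s) be the asymptotic completion of a rectifying Möbius strip. Define σ̂(s) := γ'(s)·ξ(s), which satisfies σ̂(s+l) = -σ̂(s). Then there exist at least three points t₁ < t₂ < t₃ in the half-open interval [0, l) such that σ̂ attains a local maximum or a local minimum at each tᵢ. -/
open scoped RealInnerProductSpace
open Real Set Filter Topology

noncomputable section

/- ### Auxiliary lemmas -/

lemma cross3_0 (a b : E3) : cross3 a b 0 = a 1 * b 2 - a 2 * b 1 := by simp [cross3]
lemma cross3_1 (a b : E3) : cross3 a b 1 = a 2 * b 0 - a 0 * b 2 := by simp [cross3]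
lemma cross3_2 (a b : E3) : cross3 a b 2 = a 0 * b 1 - a 1 * b 0 := by simp [cross3]

lemma det3_eq (a b c : E3) : det3 a b c = ⟪cross3 a b, c⟫ := by
  simp [det3, Matrix.det_fin_three, Fin.sum_univ_three, cross3_0, cross3_1, cross3_2,
    PiLp.inner_apply, RCLike.inner_apply]
  ring

lemma lagrange (a b : E3) : ⟪cross3 a b, cross3 a b⟫ = ⟪a,a⟫ * ⟪b,b⟫ - ⟪a,b⟫^2 := by
  simp only [PiLp.inner_apply, RCLike.inner_apply, Fin.sum_univ_three, cross3_0, cross3_1, cross3_2,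
    conj_trivial]
  ring

lemma cross3_triple (a b c : E3) : cross3 a (cross3 b c) = ⟪a,c⟫ • b - ⟪a,b⟫ • c := by
  ext i
  fin_cases i <;>
    simp [cross3_0, cross3_1, cross3_2, PiLp.inner_apply, RCLike.inner_apply,
      Fin.sum_univ_three, PiLp.smul_apply, smul_eq_mul] <;> ring

lemma cross3_zero_right (a : E3) : cross3 a 0 = 0 := by
  ext i; fin_cases i <;> simp [cross3_0, cross3_1, cross3_2]

lemma det3_self13 (a b : E3) : det3 a b a = 0 := by
  simp [det3, Matrix.det_fin_three]; ring

/-- Pointwise linear algebra: a vector `v` with prescribed inner products against `t`, `x`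
and vanishing determinant with them is a multiple of `t`. -/
lemma keyLA (t x v : E3) (d : ℝ) (ht : ⟪t,t⟫ = 1) (hx : ⟪x,x⟫ = ⟪t,x⟫^2 + 1)
    (h3 : ⟪v,t⟫ = d) (h4 : ⟪v,x⟫ = ⟪t,x⟫*d) (h5 : det3 t x v = 0) : v = d • t := by
  set n : E3 := cross3 t x with hn
  set w : E3 := v - d • t with hw
  have hwt : ⟪w,t⟫ = 0 := by
    rw [hw, inner_sub_left, real_inner_smul_left, ht, h3]; ring
  have hwx : ⟪w,x⟫ = 0 := by
    rw [hw, inner_sub_left, real_inner_smul_left, h4]; ring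
  have hnt : ⟪n,t⟫ = 0 := by rw [hn, ← det3_eq]; exact det3_self13 t x
  have h5' : ⟪n,v⟫ = 0 := by rw [hn, ← det3_eq]; exact h5
  have hnw : ⟪n,w⟫ = 0 := by
    rw [hw, inner_sub_right, real_inner_smul_right, h5', hnt]; ring
  have hnn : ⟪n,n⟫ = 1 := by
    rw [hn, lagrange, ht, hx]; ring
  have hcross : cross3 w n = 0 := by
    rw [hn, cross3_triple, hwx, hwt]; simp
  have h6 : cross3 n (cross3 w n) = ⟪n,n⟫ • w - ⟪n,w⟫ • n := cross3_triple n w n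
  rw [hcross, cross3_zero_right, hnn, hnw] at h6
  have hw0 : w = 0 := by simpa using h6.symm
  have h7 : v - d • t = 0 := hw0
  linear_combination (norm := module) h7

lemma no_ext_aux (f : ℝ → ℝ) (hc : Continuous f) {a b u v : ℝ}
    (hne : ∀ t ∈ Ioo a b, ¬(IsLocalMax f t ∨ IsLocalMin f t))
    (hu : u ∈ Icc a b) (hv : v ∈ Icc a b) (huv : u < v) (hfe : f u = f v) : False := by
  have hsub' : Ioo u v ⊆ Ioo a b := Ioo_subset_Ioo hu.1 hv.2
  have hnonempty : (Icc u v).Nonempty := nonempty_Icc.2 huv.le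
  obtain ⟨c, hc1, hc2⟩ := isCompact_Icc.exists_isMaxOn hnonempty hc.continuousOn
  obtain ⟨d, hd1, hd2⟩ := isCompact_Icc.exists_isMinOn hnonempty hc.continuousOn
  have hniMax : c ∉ Ioo u v := by
    intro hcin
    exact hne c (hsub' hcin) (Or.inl (hc2.isLocalMax (Icc_mem_nhds hcin.1 hcin.2)))
  have hniMin : d ∉ Ioo u v := by
    intro hdin
    exact hne d (hsub' hdin) (Or.inr (hd2.isLocalMin (Icc_mem_nhds hdin.1 hdin.2)))
  have hmaxval : f c = f u := by
    rcases (or_iff_not_imp_left.2 fun h1 => or_iff_not_imp_left.2 fun h2 =>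
      (⟨lt_of_le_of_ne hc1.1 (Ne.symm h1), lt_of_le_of_ne hc1.2 h2⟩ : c ∈ Ioo u v)) with h | h | h
    · rw [h]
    · rw [h, hfe]
    · exact absurd h hniMax
  have hminval : f d = f u := by
    rcases (or_iff_not_imp_left.2 fun h1 => or_iff_not_imp_left.2 fun h2 =>
      (⟨lt_of_le_of_ne hd1.1 (Ne.symm h1), lt_of_le_of_ne hd1.2 h2⟩ : d ∈ Ioo u v)) with h | h | h
    · rw [h]
    · rw [h, hfe]
    · exact absurd h hniMin
  have hconst : ∀ z ∈ Icc u v, f z = f u := by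
    intro z hz
    have h1 : f z ≤ f u := hmaxval ▸ hc2 hz
    have h2 : f u ≤ f z := hminval ▸ hd2 hz
    linarith
  set m := (u + v) / 2 with hm
  have hmin : m ∈ Ioo u v := ⟨by simp only [hm]; linarith, by simp only [hm]; linarith⟩
  refine hne m (hsub' hmin) (Or.inl ?_)
  have : Icc u v ∈ 𝓝 m := Icc_mem_nhds hmin.1 hmin.2
  filter_upwards [this] with z hz
  rw [hconst z hz, hconst m (Ioo_subset_Icc_self hmin)]

/-- A continuous function with no interior local extremum on `[a,b]` is monotone there. -/
lemma mono_or_anti (f : ℝ → ℝ) (hc : Continuous f) {a b : ℝ} (hab : a < b)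
    (hne : ∀ t ∈ Ioo a b, ¬(IsLocalMax f t ∨ IsLocalMin f t)) :
    MonotoneOn f (Icc a b) ∨ AntitoneOn f (Icc a b) := by
  have hinj : InjOn f (Icc a b) := by
    intro u hu v hv huv
    by_contra hne'
    rcases lt_or_gt_of_ne hne' with h | h
    · exact no_ext_aux f hc hne hu hv h huv
    · exact no_ext_aux f hc hne hv hu h huv.symm
  exact (ContinuousOn.strictMonoOn_of_injOn_Icc' hab.le hc.continuousOn hinj).imp
    StrictMonoOn.monotoneOn StrictAntiOn.antitoneOn

lemma deriv_nonneg_of_monotoneOn (f : ℝ → ℝ) (hd : Differentiable ℝ f)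
    (hcd : Continuous (deriv f)) {a b : ℝ} (hab : a < b) (hm : MonotoneOn f (Icc a b)) :
    ∀ t ∈ Icc a b, 0 ≤ deriv f t := by
  have hIoo : ∀ t ∈ Ioo a b, 0 ≤ deriv f t := by
    intro t ht
    have hD := (hd t).hasDerivAt
    rw [hasDerivAt_iff_tendsto_slope] at hD
    refine ge_of_tendsto hD ?_
    have hmem : Icc a b ∈ 𝓝[≠] t :=
      mem_nhdsWithin_of_mem_nhds (Icc_mem_nhds ht.1 ht.2)
    filter_upwards [hmem, self_mem_nhdsWithin] with y hy hy'
    have hy'' : y ≠ t := hy'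
    have htI : t ∈ Icc a b := Ioo_subset_Icc_self ht
    rw [slope_def_field]
    rcases lt_or_gt_of_ne hy'' with h | h
    · have h1 : f y - f t ≤ 0 := by simpa using hm hy htI h.le
      have h2 : y - t < 0 := by linarith
      rcases lt_or_eq_of_le h1 with h3 | h3
      · exact (div_pos_of_neg_of_neg h3 h2).le
      · rw [h3]; simp
    · apply div_nonneg
      · simpa using hm htI hy h.le
      · linarith
  have : Icc a b ⊆ {s | 0 ≤ deriv f s} := by
    rw [← closure_Ioo hab.ne]
    exact closure_minimal hIoo (isClosed_le continuous_const hcd)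
  exact fun t ht => this ht

lemma deriv_nonpos_of_antitoneOn (f : ℝ → ℝ) (hd : Differentiable ℝ f)
    (hcd : Continuous (deriv f)) {a b : ℝ} (hab : a < b) (hm : AntitoneOn f (Icc a b)) :
    ∀ t ∈ Icc a b, deriv f t ≤ 0 := by
  have hneg : MonotoneOn (fun s => -f s) (Icc a b) := fun x hx y hy hxy => by
    simpa using hm hx hy hxy
  have := deriv_nonneg_of_monotoneOn (fun s => -f s) hd.neg (by
    have : deriv (fun s => -f s) = fun s => -deriv f s := funext fun s => deriv.neg
    rw [this]; exact hcd.neg) hab hneg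
  intro t ht
  have h2 := this t ht
  rw [deriv.fun_neg] at h2
  linarith

lemma glue_mono (f : ℝ → ℝ) {a b c : ℝ} (hab : a ≤ b) (hbc : b ≤ c)
    (h1 : MonotoneOn f (Icc a b)) (h2 : MonotoneOn f (Icc b c)) :
    MonotoneOn f (Icc a c) := by
  intro x hx y hy hxy
  rcases le_total y b with h | h
  · exact h1 ⟨hx.1, hxy.trans h⟩ ⟨hy.1, h⟩ hxy
  · rcases le_total x b with h' | h'
    · calc f x ≤ f b := h1 ⟨hx.1, h'⟩ ⟨hab, le_refl b⟩ h'
        _ ≤ f y := h2 ⟨le_refl b, hbc⟩ ⟨h, hy.2⟩ h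
    · exact h2 ⟨h', hx.2⟩ ⟨h'.trans hxy, hy.2⟩ hxy

lemma glue_anti (f : ℝ → ℝ) {a b c : ℝ} (hab : a ≤ b) (hbc : b ≤ c)
    (h1 : AntitoneOn f (Icc a b)) (h2 : AntitoneOn f (Icc b c)) :
    AntitoneOn f (Icc a c) := by
  intro x hx y hy hxy
  rcases le_total y b with h | h
  · exact h1 ⟨hx.1, hxy.trans h⟩ ⟨hy.1, h⟩ hxy
  · rcases le_total x b with h' | h'
    · calc f y ≤ f b := h2 ⟨le_refl b, hbc⟩ ⟨h, hy.2⟩ h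
        _ ≤ f x := h1 ⟨hx.1, h'⟩ ⟨hab, le_refl b⟩ h'
    · exact h2 ⟨h', hx.2⟩ ⟨h'.trans hxy, hy.2⟩ hxy

/-- for a rectifying Möbius strip, the (extended) conical curvature
`σ̂ = γ'·ξ` is `l`-odd-periodic and has at least three local maximum or local minimum
points in `[0, l)`. -/
theorem stmt_14 (l : ℝ) (hl : 0 < l) (γ ξ : ℝ → E3)
    (hγ : ContDiff ℝ (⊤ : ℕ∞) γ) (hξ : ContDiff ℝ (⊤ : ℕ∞) ξ)
    (hper : ∀ s, γ (s + l) = γ s) (hodd : ∀ s, ξ (s + l) = -ξ s)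
    (hunit : ∀ s, ‖deriv γ s‖ = 1)
    (hgeo : ∀ s, ⟪deriv (deriv γ) s, ξ s⟫ = 0)
    (hnorm : ∀ s, ‖cross3 (ξ s) (deriv γ s)‖ = 1)
    (hflat : ∀ s, det3 (deriv γ s) (ξ s) (deriv ξ s) = 0)
    (σ : ℝ → ℝ) (hσ : ∀ s, σ s = ⟪deriv γ s, ξ s⟫) :
    (∀ s, σ (s + l) = -σ s) ∧
    ∃ t₁ t₂ t₃ : ℝ,
      0 ≤ t₁ ∧ t₁ < t₂ ∧ t₂ < t₃ ∧ t₃ < l ∧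
      (IsLocalMax σ t₁ ∨ IsLocalMin σ t₁) ∧
      (IsLocalMax σ t₂ ∨ IsLocalMin σ t₂) ∧
      (IsLocalMax σ t₃ ∨ IsLocalMin σ t₃) := by
  have hγ' : ContDiff ℝ 2 (deriv γ) := by
    have h3 : ContDiff ℝ (2+1) γ := hγ.of_le (by exact (WithTop.coe_le_coe.mpr le_top : ((2+1 : ℕ∞) : WithTop ℕ∞) ≤ ((⊤ : ℕ∞) : WithTop ℕ∞)))
    exact (contDiff_succ_iff_deriv.mp h3).2.2
  have hγ'd : Differentiable ℝ (deriv γ) := hγ'.differentiable (by norm_num)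
  have hξd : Differentiable ℝ ξ := hξ.differentiable (by simp)
  have hξ'c : Continuous (deriv ξ) := hξ.continuous_deriv (by simp)
  have hσfun : σ = fun s => ⟪deriv γ s, ξ s⟫ := funext hσ
  have hσC : ContDiff ℝ 2 σ := by rw [hσfun]; exact hγ'.inner ℝ (hξ.of_le (by exact (WithTop.coe_le_coe.mpr le_top : ((2 : ℕ∞) : WithTop ℕ∞) ≤ ((⊤ : ℕ∞) : WithTop ℕ∞))))
  have hσc : Continuous σ := hσC.continuous
  have hσd : Differentiable ℝ σ := hσC.differentiable (by norm_num)
  have hσ'c : Continuous (deriv σ) := hσC.continuous_deriv (by norm_num)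
  -- deriv γ is l-periodic
  have hper' : ∀ s, deriv γ (s + l) = deriv γ s := by
    intro s
    have h : deriv (fun x => γ (x + l)) s = deriv γ (s + l) := deriv_comp_add_const γ l s
    rw [← h]
    congr 1
    exact funext hper
  -- σ is anti-periodic
  have hσodd : ∀ s, σ (s + l) = -σ s := by
    intro s
    rw [hσ, hσ, hper', hodd, inner_neg_right]
  refine ⟨hσodd, ?_⟩
  have hσodd' : ∀ s, σ (s - l) = -σ s := by
    intro s
    have h := hσodd (s - l)
    rw [sub_add_cancel] at h
    linarith
  -- deriv σ
  have hdσ : ∀ s, HasDerivAt σ (⟪deriv γ s, deriv ξ s⟫) s := by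
    intro s
    have h1 : HasDerivAt (fun t => ⟪deriv γ t, ξ t⟫)
        (⟪deriv γ s, deriv ξ s⟫ + ⟪deriv (deriv γ) s, ξ s⟫) s :=
      HasDerivAt.inner ℝ (hγ'd s).hasDerivAt (hξd s).hasDerivAt
    rw [hgeo s, add_zero] at h1
    rw [hσfun]; exact h1
  have hderivσ : ∀ s, deriv σ s = ⟪deriv γ s, deriv ξ s⟫ := fun s => (hdσ s).deriv
  -- |ξ|² = σ² + 1
  have hξsq : ∀ s, ⟪ξ s, ξ s⟫ = σ s ^ 2 + 1 := by
    intro s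
    have h1 : ⟪cross3 (ξ s) (deriv γ s), cross3 (ξ s) (deriv γ s)⟫ = 1 := by
      rw [real_inner_self_eq_norm_sq, hnorm s]; norm_num
    rw [lagrange] at h1
    have h2 : ⟪deriv γ s, deriv γ s⟫ = 1 := by
      rw [real_inner_self_eq_norm_sq, hunit s]; norm_num
    rw [h2, mul_one] at h1
    have h3 : ⟪ξ s, deriv γ s⟫ = σ s := by rw [hσ s, real_inner_comm]
    rw [h3] at h1
    linarith
  -- ⟪ξ', ξ⟫ = σ σ'
  have hinnerξ' : ∀ s, ⟪deriv ξ s, ξ s⟫ = σ s * deriv σ s := by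
    intro s
    have h1 : HasDerivAt (fun t => ⟪ξ t, ξ t⟫) (⟪ξ s, deriv ξ s⟫ + ⟪deriv ξ s, ξ s⟫) s :=
      HasDerivAt.inner ℝ (hξd s).hasDerivAt (hξd s).hasDerivAt
    have h2 : HasDerivAt (fun t => σ t ^ 2 + 1) (2 * σ s * deriv σ s) s := by
      have h : HasDerivAt (fun t => σ t ^ 2 + 1) _ s := ((hσd s).hasDerivAt.pow 2).add_const 1
      convert h using 1
      push_cast
      ring
    have hfe : (fun t => ⟪ξ t, ξ t⟫) = fun t => σ t ^ 2 + 1 := funext fun t => hξsq t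
    rw [hfe] at h1
    have h3 := h1.unique h2
    have hsymm : ⟪ξ s, deriv ξ s⟫ = ⟪deriv ξ s, ξ s⟫ := real_inner_comm _ _
    rw [hsymm] at h3
    linarith
  -- THE KEY IDENTITY: deriv ξ = (deriv σ) • deriv γ
  have hkey : ∀ s, deriv ξ s = deriv σ s • deriv γ s := by
    intro s
    apply keyLA (deriv γ s) (ξ s) (deriv ξ s) (deriv σ s)
    · rw [real_inner_self_eq_norm_sq, hunit s]; norm_num
    · rw [hξsq s, hσ s]
    · rw [hderivσ s, real_inner_comm]
    · rw [hinnerξ' s, ← hσ s]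
    · exact hflat s
  -- no window [a, a+l] on which σ is monotone
  have no_window : ∀ a : ℝ,
      ¬(MonotoneOn σ (Icc a (a+l)) ∨ AntitoneOn σ (Icc a (a+l))) := by
    intro a hmono
    have hle : a ≤ a + l := by linarith
    have hlt : a < a + l := by linarith
    have hFTCξ : ∫ t in a..(a+l), deriv ξ t = ξ (a+l) - ξ a :=
      intervalIntegral.integral_deriv_eq_sub (fun t _ => hξd t)
        (hξ'c.intervalIntegrable _ _)
    have hFTCσ : ∫ t in a..(a+l), deriv σ t = σ (a+l) - σ a :=
      intervalIntegral.integral_deriv_eq_sub (fun t _ => hσd t)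
        (hσ'c.intervalIntegrable _ _)
    have hval : ξ (a+l) - ξ a = (-2 : ℝ) • ξ a := by
      rw [hodd a]; module
    have hnormval : ‖ξ (a+l) - ξ a‖ = 2 * ‖ξ a‖ := by
      rw [hval, norm_smul]
      simp [abs_of_nonneg]
    have hnormline : ∀ t, ‖deriv ξ t‖ = |deriv σ t| := by
      intro t
      rw [hkey t, norm_smul, hunit t, Real.norm_eq_abs, mul_one]
    have hbound : 2 * ‖ξ a‖ ≤ ∫ t in a..(a+l), |deriv σ t| := by
      calc 2 * ‖ξ a‖ = ‖∫ t in a..(a+l), deriv ξ t‖ := by rw [hFTCξ, hnormval]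
        _ ≤ ∫ t in a..(a+l), ‖deriv ξ t‖ :=
            intervalIntegral.norm_integral_le_integral_norm hle
        _ = ∫ t in a..(a+l), |deriv σ t| := by
            apply intervalIntegral.integral_congr
            intro t _
            exact hnormline t
    have hnormsq : ‖ξ a‖^2 = σ a^2 + 1 := by
      rw [← real_inner_self_eq_norm_sq]; exact hξsq a
    have hσval : σ (a+l) - σ a = -(2 * σ a) := by rw [hσodd a]; ring
    rcases hmono with hm | hm
    · have hs : ∀ t ∈ Icc a (a+l), 0 ≤ deriv σ t :=
        deriv_nonneg_of_monotoneOn σ hσd hσ'c hlt hm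
      have habs : ∫ t in a..(a+l), |deriv σ t| = ∫ t in a..(a+l), deriv σ t := by
        apply intervalIntegral.integral_congr
        intro t ht
        rw [uIcc_of_le hle] at ht
        exact abs_of_nonneg (hs t ht)
      rw [habs, hFTCσ, hσval] at hbound
      nlinarith [norm_nonneg (ξ a)]
    · have hs : ∀ t ∈ Icc a (a+l), deriv σ t ≤ 0 :=
        deriv_nonpos_of_antitoneOn σ hσd hσ'c hlt hm
      have habs : ∫ t in a..(a+l), |deriv σ t| = ∫ t in a..(a+l), -deriv σ t := by
        apply intervalIntegral.integral_congr
        intro t ht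
        rw [uIcc_of_le hle] at ht
        exact abs_of_nonpos (hs t ht)
      rw [intervalIntegral.integral_neg, hFTCσ, hσval] at habs
      rw [habs] at hbound
      nlinarith [norm_nonneg (ξ a)]
  -- shifting local extrema down by l
  have hshift_down : ∀ t, (IsLocalMax σ t ∨ IsLocalMin σ t) →
      (IsLocalMax σ (t - l) ∨ IsLocalMin σ (t - l)) := by
    intro t hp
    have hmap : Tendsto (fun y : ℝ => y + l) (𝓝 (t - l)) (𝓝 t) := by
      have hcont : Continuous (fun y : ℝ => y + l) := continuous_id.add continuous_const
      have h := hcont.tendsto (t - l)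
      rwa [sub_add_cancel] at h
    rcases hp with h | h
    · refine Or.inr ?_
      filter_upwards [hmap.eventually h] with y hy
      have e1 : σ (t - l) = -σ t := hσodd' t
      have e2 : σ (y + l) = -σ y := hσodd y
      rw [e2] at hy
      rw [e1]
      linarith
    · refine Or.inl ?_
      filter_upwards [hmap.eventually h] with y hy
      have e1 : σ (t - l) = -σ t := hσodd' t
      have e2 : σ (y + l) = -σ y := hσodd y
      rw [e2] at hy
      rw [e1]
      linarith
  -- flipping monotonicity across a shift by l
  have hflip_ma : ∀ u v : ℝ, MonotoneOn σ (Icc u v) → AntitoneOn σ (Icc (u+l) (v+l)) := by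
    intro u v hm x hx y hy hxy
    have hx' : x - l ∈ Icc u v := ⟨by linarith [hx.1], by linarith [hx.2]⟩
    have hy' : y - l ∈ Icc u v := ⟨by linarith [hy.1], by linarith [hy.2]⟩
    have h := hm hx' hy' (by linarith)
    have e1 : σ (x - l) = -σ x := hσodd' x
    have e2 : σ (y - l) = -σ y := hσodd' y
    rw [e1, e2] at h
    linarith
  have hflip_am : ∀ u v : ℝ, AntitoneOn σ (Icc u v) → MonotoneOn σ (Icc (u+l) (v+l)) := by
    intro u v hm x hx y hy hxy
    have hx' : x - l ∈ Icc u v := ⟨by linarith [hx.1], by linarith [hx.2]⟩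
    have hy' : y - l ∈ Icc u v := ⟨by linarith [hy.1], by linarith [hy.2]⟩
    have h := hm hx' hy' (by linarith)
    have e1 : σ (x - l) = -σ x := hσodd' x
    have e2 : σ (y - l) = -σ y := hσodd' y
    rw [e1, e2] at h
    linarith
  -- main combinatorial argument
  by_contra hcon
  have K : ∀ x y z : ℝ, x ∈ Ico 0 l → y ∈ Ico 0 l → z ∈ Ico 0 l → x < y → y < z →
      (IsLocalMax σ x ∨ IsLocalMin σ x) → (IsLocalMax σ y ∨ IsLocalMin σ y) →
      (IsLocalMax σ z ∨ IsLocalMin σ z) → False := by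
    intro x y z hx _ hz hxy hyz px py pz
    exact hcon ⟨x, y, z, hx.1, hxy, hyz, hz.2, px, py, pz⟩
  by_cases h0 : ∃ r, r ∈ Ico 0 l ∧ (IsLocalMax σ r ∨ IsLocalMin σ r)
  · obtain ⟨r₁, hr₁, hp₁⟩ := h0
    by_cases h1 : ∃ r', r' ∈ Ico 0 l ∧ (IsLocalMax σ r' ∨ IsLocalMin σ r') ∧ r' ≠ r₁
    · obtain ⟨r₂, hr₂, hp₂, hne12⟩ := h1
      -- two distinct residues: handle ordered pair (u, v)
      have main2 : ∀ u v : ℝ, u ∈ Ico 0 l → v ∈ Ico 0 l → u < v →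
          (IsLocalMax σ u ∨ IsLocalMin σ u) → (IsLocalMax σ v ∨ IsLocalMin σ v) → False := by
        intro u v hu hv huv pu pv
        have honly : ∀ t, t ∈ Ico 0 l → (IsLocalMax σ t ∨ IsLocalMin σ t) →
            t = u ∨ t = v := by
          intro t ht pt
          by_contra hne
          push_neg at hne
          obtain ⟨htu, htv⟩ := hne
          rcases lt_trichotomy t u with h | h | h
          · exact K t u v ht hu hv h huv pt pu pv
          · exact htu h
          · rcases lt_trichotomy t v with h' | h' | h'
            · exact K u t v hu ht hv h h' pu pt pv
            · exact htv h'
            · exact K u v t hu hv ht huv h' pu pv pt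
        have hne1 : ∀ t ∈ Ioo u v, ¬(IsLocalMax σ t ∨ IsLocalMin σ t) := by
          intro t ht hp
          rcases honly t ⟨le_trans hu.1 ht.1.le, lt_trans ht.2 hv.2⟩ hp with h | h
          · exact absurd h (ne_of_gt ht.1)
          · exact absurd h (ne_of_lt ht.2)
        have hne2 : ∀ t ∈ Ioo v (u + l), ¬(IsLocalMax σ t ∨ IsLocalMin σ t) := by
          intro t ht hp
          by_cases hcase : t < l
          · rcases honly t ⟨le_trans hu.1 (le_trans huv.le ht.1.le), hcase⟩ hp with h | h
            · have : u < t := lt_trans huv ht.1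
              exact absurd h (ne_of_gt this)
            · exact absurd h (ne_of_gt ht.1)
          · push_neg at hcase
            have hp' := hshift_down t hp
            have htl : t - l ∈ Ico 0 l := ⟨by linarith, by linarith [ht.2, hu.2]⟩
            rcases honly (t - l) htl hp' with h | h
            · have : t = u + l := by linarith
              exact absurd this (ne_of_lt ht.2)
            · have : t - l < u := by linarith [ht.2]
              linarith [huv]
        have hne3 : ∀ t ∈ Ioo (u+l) (v+l), ¬(IsLocalMax σ t ∨ IsLocalMin σ t) := by
          intro t ht hp
          exact hne1 (t - l) ⟨by linarith [ht.1], by linarith [ht.2]⟩ (hshift_down t hp)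
        have hvul : v < u + l := by linarith [hu.1, hv.2]
        have m1 := mono_or_anti σ hσc huv hne1
        have m2 := mono_or_anti σ hσc hvul hne2
        rcases m1 with m1 | m1 <;> rcases m2 with m2 | m2
        · exact no_window u (Or.inl (glue_mono σ huv.le hvul.le m1 m2))
        · have m3 : AntitoneOn σ (Icc (u+l) (v+l)) := hflip_ma u v m1
          refine no_window v (Or.inr ?_)
          exact glue_anti σ hvul.le (by linarith) m2 m3
        · have m3 : MonotoneOn σ (Icc (u+l) (v+l)) := hflip_am u v m1
          refine no_window v (Or.inl ?_)
          exact glue_mono σ hvul.le (by linarith) m2 m3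
        · exact no_window u (Or.inr (glue_anti σ huv.le hvul.le m1 m2))
      rcases lt_or_gt_of_ne hne12 with h | h
      · exact main2 r₂ r₁ hr₂ hr₁ h hp₂ hp₁
      · exact main2 r₁ r₂ hr₁ hr₂ h hp₁ hp₂
    · -- single residue r₁
      push_neg at h1
      have hne1 : ∀ t ∈ Ioo r₁ (r₁ + l), ¬(IsLocalMax σ t ∨ IsLocalMin σ t) := by
        intro t ht hp
        by_cases hcase : t < l
        · have h := h1 t ⟨le_trans hr₁.1 ht.1.le, hcase⟩ hp
          exact absurd h (ne_of_gt ht.1)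
        · push_neg at hcase
          have hp' := hshift_down t hp
          have htl : t - l ∈ Ico 0 l := ⟨by linarith, by linarith [ht.2, hr₁.2]⟩
          have h := h1 (t - l) htl hp'
          have : t = r₁ + l := by linarith
          exact absurd this (ne_of_lt ht.2)
      exact no_window r₁ (mono_or_anti σ hσc (by linarith) hne1)
  · -- no extrema at all in [0, l)
    push_neg at h0
    have hne1 : ∀ t ∈ Ioo 0 l, ¬(IsLocalMax σ t ∨ IsLocalMin σ t) := by
      intro t ht hp
      rcases hp with h | h
      · exact (h0 t ⟨ht.1.le, ht.2⟩).1 h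
      · exact (h0 t ⟨ht.1.le, ht.2⟩).2 h
    have h := mono_or_anti σ hσc hl hne1
    apply no_window 0
    rwa [zero_add]
end
end
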